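/- Let γ = γ_{p,q,l} = (1,…,p)(p+1,…,p+q)(p+q+1,…,p+q+l) ∈ S_{p+q+l}. If π, σ ∈ S_NC(p,q,l) (non-crossing annular permutations on three circles) and π ≤ σ⁻¹γ, then σ ≤ γπ⁻¹. -/

import Mathlib

/-!
The order `π ≤ σ` is a geodesic condition: it holds iff `#(π) + #(π⁻¹σ) = n + #(σ)`. Granting
this, the theorem is bookkeeping: the two non-crossing conditions give
`#(π) + #(π⁻¹γ) = #(σ) + #(σ⁻¹γ)`, and `#` is a class function, so `#(σ⁻¹γπ⁻¹) = #(π⁻¹σ⁻¹γ)`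
and `#(γπ⁻¹) = #(π⁻¹γ)`.

The characterisation rests on `#(f) + #(g) ≤ n + #(f ∨ g) ≤ n + #(fg)`, where the first
inequality follows by induction on `n - #(f)`: splitting a cycle of `f` by a transposition gives
`f'` with more cycles, and `f ∨ g` arises from `f' ∨ g` by merging at most two blocks. When the cycles of `π` lie in those of `σ`, the same
inequality on each cycle of `σ` (to which `σ` restricts as a single cycle) gives per-cycle bounds
summing to the global one, so global equality means equality on every cycle. Conversely, global
equality gives `π ∨ π⁻¹σ`, which is coarser than the cycle partition of `σ = π · π⁻¹σ`, at least
as many blocks, so the two coincide and the cycles of `π` lie in those of `σ`.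
-/

open Equiv

namespace ThirdOrderFree

variable {α : Type*}

/-- The setoid whose classes are the cycles (orbits) of a permutation. -/
def sameCycleSetoid (σ : Perm α) : Setoid α :=
  ⟨σ.SameCycle,
    ⟨fun x => Equiv.Perm.SameCycle.refl σ x, fun h => h.symm, fun h h' => h.trans h'⟩⟩

/-- Number of cycles (orbits, including fixed points) of a permutation. -/
noncomputable def numCycles (σ : Perm α) : ℕ :=
  Nat.card (Quotient (sameCycleSetoid σ))

/-- The length `|σ| = n - #(σ)`. -/
noncomputable def len (σ : Perm α) : ℕ :=
  Nat.card α - numCycles σ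

/-- Join of the cycle partitions of two permutations. -/
def joinSetoid (π σ : Perm α) : Setoid α :=
  sameCycleSetoid π ⊔ sameCycleSetoid σ

/-- Number of blocks of `π ∨ σ`. -/
noncomputable def numBlocks (π σ : Perm α) : ℕ :=
  Nat.card (Quotient (joinSetoid π σ))

/-- `π ∨ σ` is the one-block partition. -/
def JoinTop (π σ : Perm α) : Prop :=
  ∀ x y : α, (joinSetoid π σ).r x y

/-- `π` is a non-crossing (annular) permutation with respect to `γ`. -/
def SNC (γ π : Perm α) : Prop :=
  JoinTop π γ ∧
    numCycles π + numCycles (π⁻¹ * γ) + numCycles γ = Nat.card α + 2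

/-- `τ` separates the points of `N`: no cycle of `τ` contains two distinct points of `N`. -/
def Separates (τ : Perm α) (N : Set α) : Prop :=
  ∀ x ∈ N, ∀ y ∈ N, τ.SameCycle x y → x = y

/-- The first-return map of `σ` on the set `{x | p x}`. -/
noncomputable def firstReturn (σ : Perm α) (p : α → Prop) (x : α) : α :=
  (σ ^ sInf {k : ℕ | 0 < k ∧ p ((σ ^ k) x)}) x

open Classical in
/-- The restriction of `σ` to `{x | p x}`: the unique permutation agreeing with the
first-return map (it exists whenever `α` is finite). -/
noncomputable def restrictPerm (σ : Perm α) (p : α → Prop) : Perm {x // p x} :=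
  if h : ∃ e : Perm {x // p x}, ∀ x : {x // p x}, (e x : α) = firstReturn σ p (x : α)
  then h.choose else 1

/-- `π ≤ σ` : each cycle of `π` is contained in a cycle of `σ` and on each cycle of
`σ` the restriction of `π` is a non-crossing permutation of that cycle. -/
def le' (π σ : Perm α) : Prop :=
  (∀ x y : α, π.SameCycle x y → σ.SameCycle x y) ∧
  ∀ x : α,
    numCycles (restrictPerm π (σ.SameCycle x)) +
      numCycles ((restrictPerm π (σ.SameCycle x))⁻¹ * restrictPerm σ (σ.SameCycle x)) =
      Nat.card {y // σ.SameCycle x y} + 1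

/-- `π ≲ σ` : on each block of `π ∨ σ`, `π` is annular non-crossing w.r.t. `σ`. -/
def ncRel (π σ : Perm α) : Prop :=
  ∀ x : α,
    SNC (restrictPerm σ ((joinSetoid π σ).r x)) (restrictPerm π ((joinSetoid π σ).r x))

/-- The permutation of `Σ i, Fin (n i)` rotating each block: the product of the
directed cycles `T i` of lengths `n i`. -/
def blockRotate {ι : Type*} (n : ι → ℕ) : Perm ((i : ι) × Fin (n i)) :=
  Equiv.sigmaCongrRight fun i => finRotate (n i)

/-- The first elements of the blocks. -/
def zeroSection {ι : Type*} (n : ι → ℕ) (hn : ∀ i, 0 < n i) :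
    ι ≃ {x : (i : ι) × Fin (n i) // x.2.val = 0} where
  toFun i := ⟨⟨i, ⟨0, hn i⟩⟩, rfl⟩
  invFun x := x.1.1
  left_inv i := rfl
  right_inv := fun x => by
    obtain ⟨⟨i, j⟩, hj⟩ := x
    exact Subtype.ext (congrArg (Sigma.mk i) (Fin.ext hj.symm))

/-- `π_{\vec n}` : merge the blocks `T i` along the cycles of `π`; within a block it
moves forward, and the last element of block `i` is sent to the first element of
block `π i`. -/
def mergePerm {ι : Type*} (n : ι → ℕ) (hn : ∀ i, 0 < n i) (π : Perm ι) :
    Perm ((i : ι) × Fin (n i)) :=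
  (π.extendDomain (zeroSection n hn)) * blockRotate n

lemma card_quotient_le_of_le [Finite α] {s t : Setoid α} (h : s ≤ t) :
    Nat.card (Quotient t) ≤ Nat.card (Quotient s) :=
  Nat.card_le_card_of_surjective (Setoid.map_of_le h) (Quotient.ind fun a => ⟨⟦a⟧, rfl⟩)

lemma eq_of_le_of_card_quotient_le [Finite α] {s t : Setoid α} (h : s ≤ t)
    (hc : Nat.card (Quotient s) ≤ Nat.card (Quotient t)) : s = t := by
  have hsurj : Function.Surjective (Setoid.map_of_le h) := Quotient.ind fun a => ⟨⟦a⟧, rfl⟩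
  have hinj := ((Nat.bijective_iff_surjective_and_card _).2
    ⟨hsurj, le_antisymm hc (card_quotient_le_of_le h)⟩).1
  exact le_antisymm h fun x y hxy => Quotient.exact (hinj (Quotient.sound hxy :
    Setoid.map_of_le h ⟦x⟧ = Setoid.map_of_le h ⟦y⟧))

lemma rel_swap_apply {s : Setoid α} [DecidableEq α] {a b x y : α} (hab : s a b) (hxy : s x y) :
    s x (swap a b y) := by
  rw [swap_apply_def]
  split_ifs with hya hyb
  · exact s.trans (hya ▸ hxy) hab
  · exact s.trans (hyb ▸ hxy) (s.symm hab)
  · exact hxy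

open Classical in
noncomputable def glue (s : Setoid α) (a b : α) : Setoid α :=
  Setoid.ker fun x => if Quotient.mk s x = Quotient.mk s b then Quotient.mk s a else Quotient.mk s x

lemma le_glue (s : Setoid α) (a b : α) : s ≤ glue s a b := fun x y h => by
  rw [glue, Setoid.ker_def, Quotient.sound h]

lemma glue_rel (s : Setoid α) (a b : α) : glue s a b a b := by
  rw [glue, Setoid.ker_def, if_pos rfl, ite_self]

lemma card_quotient_le_card_quotient_glue_add_one [Finite α] (s : Setoid α) (a b : α) :
    Nat.card (Quotient s) ≤ Nat.card (Quotient (glue s a b)) + 1 := by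
  classical
  rw [← Finite.card_option]
  refine Nat.card_le_card_of_injective
    (fun q => if q = ⟦b⟧ then none else some (Setoid.map_of_le (le_glue s a b) q)) ?_
  intro q₁ q₂ heq
  induction q₁, q₂ using Quotient.ind₂ with | _ x y
  dsimp only at heq
  split_ifs at heq with hx hy hy
  · exact hx.trans hy.symm
  · have := Setoid.ker_def.1 (@Quotient.exact _ (glue s a b) x y (Option.some.inj heq))
    simpa only [hx, hy, if_false] using this

lemma sameCycleSetoid_le_of_forall_rel [Finite α] {s : Setoid α} {f : Perm α} (h : ∀ x, s x (f x)) :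
    sameCycleSetoid f ≤ s := by
  intro x y hxy
  obtain ⟨i, -, rfl⟩ := (hxy : f.SameCycle x y).exists_pow_eq'
  clear hxy
  induction i with
  | zero => exact s.refl x
  | succ n ih => rw [pow_succ', Perm.mul_apply]; exact s.trans ih (h _)

lemma numCycles_le_card [Finite α] (f : Perm α) : numCycles f ≤ Nat.card α :=
  Nat.card_le_card_of_surjective _ Quotient.mk_surjective

lemma numCycles_one [Finite α] : numCycles (1 : Perm α) = Nat.card α :=
  le_antisymm (numCycles_le_card 1) <|
    Nat.card_le_card_of_injective _ fun _ _ h => Perm.sameCycle_one.1 (Quotient.exact h)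

lemma numCycles_conj (g f : Perm α) : numCycles (g * f * g⁻¹) = numCycles f :=
  Nat.card_congr (Quotient.congr g⁻¹ fun _ _ => Perm.sameCycle_conj)

lemma numCycles_mul_comm (f g : Perm α) : numCycles (f * g) = numCycles (g * f) := by
  rw [← numCycles_conj g (f * g), mul_assoc, mul_inv_cancel_right]

lemma sameCycleSetoid_mul_le_joinSetoid [Finite α] (f g : Perm α) :
    sameCycleSetoid (f * g) ≤ joinSetoid f g :=
  sameCycleSetoid_le_of_forall_rel fun x =>
    (joinSetoid f g).trans
      (le_sup_right (a := sameCycleSetoid f) (⟨1, rfl⟩ : g.SameCycle x (g x)))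
      (le_sup_left (b := sameCycleSetoid g) (⟨1, rfl⟩ : f.SameCycle (g x) (f (g x))))

lemma numCycles_lt_numCycles_swap_mul [Finite α] [DecidableEq α] (f : Perm α) {a : α}
    (ha : f a ≠ a) : numCycles f < numCycles (swap a (f a) * f) := by
  set t := swap a (f a) * f
  have hle : sameCycleSetoid t ≤ sameCycleSetoid f := sameCycleSetoid_le_of_forall_rel fun x =>
    rel_swap_apply (s := sameCycleSetoid f) (⟨1, rfl⟩ : f.SameCycle a (f a)) ⟨1, rfl⟩
  by_contra! hc
  have hsc : sameCycleSetoid t a (f a) := by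
    rw [eq_of_le_of_card_quotient_le hle hc]
    exact ⟨1, rfl⟩
  exact ha (Perm.SameCycle.eq_of_left hsc (by simp [t, Function.IsFixedPt])).symm

lemma numCycles_add_numCycles_le_card_add_numBlocks [Finite α] (f g : Perm α) :
    numCycles f + numCycles g ≤ Nat.card α + numBlocks f g := by
  classical
  by_cases hf : f = 1
  · subst hf
    have hjoin : joinSetoid 1 g ≤ sameCycleSetoid g :=
      sup_le (fun x y h => Perm.sameCycle_one.1 h ▸ Perm.SameCycle.refl g x) le_rfl
    have := card_quotient_le_of_le hjoin
    rw [numCycles_one, numBlocks]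
    exact Nat.add_le_add_left this _
  obtain ⟨a, ha⟩ : ∃ a, f a ≠ a := not_forall.1 fun h => hf (Equiv.ext h)
  set f' := swap a (f a) * f
  have hsplit : numCycles f < numCycles f' := numCycles_lt_numCycles_swap_mul f ha
  have hf'g := numCycles_add_numCycles_le_card_add_numBlocks f' g
  have hglue : joinSetoid f g ≤ glue (joinSetoid f' g) a (f a) := by
    refine sup_le (sameCycleSetoid_le_of_forall_rel fun x => ?_)
      (le_sup_right.trans (le_glue _ _ _))
    have := rel_swap_apply (glue_rel (joinSetoid f' g) a (f a))
      (le_glue _ _ _ (le_sup_left (b := sameCycleSetoid g) (⟨1, rfl⟩ : f'.SameCycle x (f' x))))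
    rwa [Perm.mul_apply, swap_apply_self] at this
  have := card_quotient_le_of_le hglue
  have := card_quotient_le_card_quotient_glue_add_one (joinSetoid f' g) a (f a)
  unfold numBlocks at *
  omega
termination_by Nat.card α - numCycles f
decreasing_by
  classical
  have := numCycles_le_card (swap a (f a) * f)
  have := numCycles_lt_numCycles_swap_mul f ha
  omega

lemma numCycles_add_numCycles_le_card_add_numCycles_mul [Finite α] (f g : Perm α) :
    numCycles f + numCycles g ≤ Nat.card α + numCycles (f * g) :=
  (numCycles_add_numCycles_le_card_add_numBlocks f g).trans <|
    Nat.add_le_add_left (card_quotient_le_of_le (sameCycleSetoid_mul_le_joinSetoid f g)) _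

lemma restrictPerm_eq_subtypePerm (σ : Perm α) {p : α → Prop} (hp : ∀ x, p (σ x) ↔ p x) :
    restrictPerm σ p = σ.subtypePerm hp := by
  have hret : ∀ x : {x // p x}, firstReturn σ p x = σ x := fun x => by
    have h1 : 1 ∈ {k : ℕ | 0 < k ∧ p ((σ ^ k) x)} := ⟨one_pos, by simpa using (hp x).2 x.2⟩
    rw [firstReturn, le_antisymm (Nat.sInf_le h1) (Nat.sInf_mem ⟨1, h1⟩).1, pow_one]
  have hex : ∃ e : Perm {x // p x}, ∀ x, (e x : α) = firstReturn σ p x :=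
    ⟨σ.subtypePerm hp, fun x => (hret x).symm⟩
  rw [restrictPerm, dif_pos hex]
  exact Equiv.ext fun x => Subtype.ext ((hex.choose_spec x).trans (hret x))

lemma restrictPerm_inv_mul {π σ : Perm α} {p : α → Prop} (hπ : ∀ x, p (π x) ↔ p x)
    (hσ : ∀ x, p (σ x) ↔ p x) :
    (restrictPerm π p)⁻¹ * restrictPerm σ p = restrictPerm (π⁻¹ * σ) p := by
  rw [restrictPerm_eq_subtypePerm π hπ, restrictPerm_eq_subtypePerm σ hσ,
    restrictPerm_eq_subtypePerm (π⁻¹ * σ) fun x => by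
      rw [Perm.mul_apply, ← hπ, Perm.coe_inv, Equiv.apply_symm_apply, hσ],
    Perm.inv_subtypePerm, Perm.subtypePerm_mul]

lemma numCycles_eq_sum_numCycles_restrictPerm [Finite α] {ι : Type*} [Fintype ι] (τ : Perm α)
    (F : α → ι) (hF : ∀ x, F (τ x) = F x) :
    numCycles τ = ∑ i, numCycles (restrictPerm τ (F · = i)) := by
  have hle : sameCycleSetoid τ ≤ Setoid.ker F :=
    sameCycleSetoid_le_of_forall_rel fun x => (hF x).symm
  let G : Quotient (sameCycleSetoid τ) → ι := Quotient.lift F fun _ _ h => hle h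
  rw [numCycles, ← Nat.card_congr (Equiv.sigmaFiberEquiv G), Nat.card_sigma]
  refine Finset.sum_congr rfl fun i _ => ?_
  rw [restrictPerm_eq_subtypePerm τ (p := (F · = i)) fun x => by rw [hF]]
  exact Nat.card_congr (Equiv.subtypeQuotientEquivQuotientSubtype (F · = i) (G · = i)
    (fun _ => Iff.rfl) fun _ _ => Perm.sameCycle_subtypePerm)

section Geodesic

variable {π σ : Perm α}

lemma sameCycle_eq_mk_eq (σ : Perm α) (x : α) :
    σ.SameCycle x = fun y => Quotient.mk (sameCycleSetoid σ) y = ⟦x⟧ :=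
  funext fun _ => propext ⟨fun h => Quotient.sound h.symm, fun h => (Quotient.exact h).symm⟩

lemma mk_apply_of_le (hπσ : sameCycleSetoid π ≤ sameCycleSetoid σ) (x : α) :
    Quotient.mk (sameCycleSetoid σ) (π x) = ⟦x⟧ :=
  Quotient.sound (hπσ (⟨1, rfl⟩ : π.SameCycle x (π x))).symm

lemma mk_inv_mul_apply_of_le (hπσ : sameCycleSetoid π ≤ sameCycleSetoid σ) (x : α) :
    Quotient.mk (sameCycleSetoid σ) ((π⁻¹ * σ) x) = ⟦x⟧ := by
  rw [Perm.mul_apply, ← mk_apply_of_le hπσ, Perm.coe_inv, Equiv.apply_symm_apply,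
    mk_apply_of_le le_rfl]

lemma restrictPerm_inv_mul_cycle (hπσ : sameCycleSetoid π ≤ sameCycleSetoid σ)
    (c : Quotient (sameCycleSetoid σ)) :
    (restrictPerm π (⟦·⟧ = c))⁻¹ * restrictPerm σ (⟦·⟧ = c) = restrictPerm (π⁻¹ * σ) (⟦·⟧ = c) :=
  restrictPerm_inv_mul (fun x => by rw [mk_apply_of_le hπσ]) fun x => by rw [mk_apply_of_le le_rfl]

lemma numCycles_restrictPerm_cycle [Finite α] (σ : Perm α) (c : Quotient (sameCycleSetoid σ)) :
    numCycles (restrictPerm σ (⟦·⟧ = c)) = 1 := by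
  induction c using Quotient.ind with | _ x
  rw [← sameCycle_eq_mk_eq, restrictPerm_eq_subtypePerm σ fun _ => Perm.sameCycle_apply_right,
    numCycles, Nat.card_eq_one_iff_unique]
  exact ⟨⟨Quotient.ind₂ fun y z =>
    Quotient.sound (Perm.sameCycle_subtypePerm.2 (y.2.symm.trans z.2))⟩, ⟨⟦⟨x, .refl _ _⟩⟧⟩⟩

lemma le'_iff_forall_cycle (hπσ : sameCycleSetoid π ≤ sameCycleSetoid σ) :
    le' π σ ↔ ∀ c : Quotient (sameCycleSetoid σ),
      numCycles (restrictPerm π (⟦·⟧ = c)) + numCycles (restrictPerm (π⁻¹ * σ) (⟦·⟧ = c)) =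
        Nat.card {y // ⟦y⟧ = c} + 1 := by
  rw [le', and_iff_right (a := ∀ x y, π.SameCycle x y → σ.SameCycle x y) fun x y h => hπσ h,
    Quotient.forall]
  exact forall_congr' fun x => by rw [sameCycle_eq_mk_eq, restrictPerm_inv_mul_cycle hπσ]

lemma numCycles_restrictPerm_add_le [Finite α] (hπσ : sameCycleSetoid π ≤ sameCycleSetoid σ)
    (c : Quotient (sameCycleSetoid σ)) :
    numCycles (restrictPerm π (⟦·⟧ = c)) + numCycles (restrictPerm (π⁻¹ * σ) (⟦·⟧ = c)) ≤
      Nat.card {y // ⟦y⟧ = c} + 1 := by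
  rw [← restrictPerm_inv_mul_cycle hπσ]
  have := numCycles_add_numCycles_le_card_add_numCycles_mul (restrictPerm π (⟦·⟧ = c))
    ((restrictPerm π (⟦·⟧ = c))⁻¹ * restrictPerm σ (⟦·⟧ = c))
  rwa [mul_inv_cancel_left, numCycles_restrictPerm_cycle] at this

lemma sameCycleSetoid_le_of_numCycles_add_numCycles_eq [Finite α]
    (h : numCycles π + numCycles (π⁻¹ * σ) = Nat.card α + numCycles σ) :
    sameCycleSetoid π ≤ sameCycleSetoid σ := by
  have hσ : sameCycleSetoid σ ≤ joinSetoid π (π⁻¹ * σ) := by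
    simpa only [mul_inv_cancel_left] using sameCycleSetoid_mul_le_joinSetoid π (π⁻¹ * σ)
  have := numCycles_add_numCycles_le_card_add_numBlocks π (π⁻¹ * σ)
  have := card_quotient_le_of_le hσ
  rw [eq_of_le_of_card_quotient_le hσ (by unfold numBlocks numCycles at *; omega)]
  exact le_sup_left

theorem le'_iff_numCycles_add_numCycles_eq [Finite α] (π σ : Perm α) :
    le' π σ ↔ numCycles π + numCycles (π⁻¹ * σ) = Nat.card α + numCycles σ := by
  suffices key : sameCycleSetoid π ≤ sameCycleSetoid σ →
      (le' π σ ↔ numCycles π + numCycles (π⁻¹ * σ) = Nat.card α + numCycles σ) from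
    ⟨fun h => (key fun x y hxy => h.1 x y hxy).1 h,
      fun h => (key (sameCycleSetoid_le_of_numCycles_add_numCycles_eq h)).2 h⟩
  intro hπσ
  have := Fintype.ofFinite (Quotient (sameCycleSetoid σ))
  have hcycles : numCycles π + numCycles (π⁻¹ * σ) = ∑ c : Quotient (sameCycleSetoid σ),
      (numCycles (restrictPerm π (⟦·⟧ = c)) + numCycles (restrictPerm (π⁻¹ * σ) (⟦·⟧ = c))) := by
    rw [Finset.sum_add_distrib,
      ← numCycles_eq_sum_numCycles_restrictPerm π _ (mk_apply_of_le hπσ),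
      ← numCycles_eq_sum_numCycles_restrictPerm (π⁻¹ * σ) _ (mk_inv_mul_apply_of_le hπσ)]
  have hcard : Nat.card α + numCycles σ =
      ∑ c : Quotient (sameCycleSetoid σ), (Nat.card {y // ⟦y⟧ = c} + 1) := by
    rw [Finset.sum_add_distrib, ← Nat.card_sigma,
      Nat.card_congr (Equiv.sigmaFiberEquiv (Quotient.mk (sameCycleSetoid σ)))]
    simp [numCycles, Nat.card_eq_fintype_card]
  rw [le'_iff_forall_cycle hπσ, hcycles, hcard,
    Finset.sum_eq_sum_iff_of_le fun c _ => numCycles_restrictPerm_add_le hπσ c]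
  simp only [Finset.mem_univ, true_implies]

end Geodesic

theorem le'_mul_inv_of_le'_inv_mul [Finite α] {γ π σ : Perm α}
    (hπσ : numCycles π + numCycles (π⁻¹ * γ) = numCycles σ + numCycles (σ⁻¹ * γ))
    (h : le' π (σ⁻¹ * γ)) : le' σ (γ * π⁻¹) := by
  rw [le'_iff_numCycles_add_numCycles_eq] at h ⊢
  rw [← mul_assoc, numCycles_mul_comm _ π⁻¹, numCycles_mul_comm γ]
  omega

theorem stmt3_general (p q l : ℕ)
    (γ : Equiv.Perm ((i : Fin 3) × Fin (![p, q, l] i)))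
    (π σ : Equiv.Perm ((i : Fin 3) × Fin (![p, q, l] i)))
    (hπ : SNC γ π) (hσ : SNC γ σ) (h : le' π (σ⁻¹ * γ)) :
    le' σ (γ * π⁻¹) :=
  le'_mul_inv_of_le'_inv_mul (by have := hπ.2; have := hσ.2; omega) h

/-- if `π, σ ∈ S_NC(p,q,l)` and `π ≤ σ⁻¹γ`, then `σ ≤ γπ⁻¹`. -/
theorem stmt3 (p q l : ℕ)
    (γ : Equiv.Perm ((i : Fin 3) × Fin (![p, q, l] i)))
    (hγ : γ = blockRotate ![p, q, l])
    (π σ : Equiv.Perm ((i : Fin 3) × Fin (![p, q, l] i)))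
    (hπ : SNC γ π) (hσ : SNC γ σ) (h : le' π (σ⁻¹ * γ)) :
    le' σ (γ * π⁻¹) :=
  stmt3_general p q l γ π σ hπ hσ h

end ThirdOrderFree
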